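/- arXiv:2211.09251 — 3 statements merged into one kernel-verified Lean document; each statement's English description precedes it below -/
import Mathlib

section
/- Let pri : [n] → ℝ assign distinct priorities to items 1,…,n, and let T be the unique treap (binary search tree on keys 1,…,n that is heap-ordered by pri). Then for any two items x, y, the node y is an ancestor of x in T (or y = x) if and only if pri y = max over z in the interval [min(x,y), max(x,y)] of pri z. -/
/-- Binary trees with natural-number keys. -/
inductive BTree where
  | leaf : BTree
  | node : BTree → ℕ → BTree → BTree

namespace BTree

/-- Membership of a key in a tree. -/
def mem : BTree → ℕ → Prop
  | leaf, _ => False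
  | node l k r, x => x = k ∨ l.mem x ∨ r.mem x

/-- Binary search tree property. -/
def isBST : BTree → Prop
  | leaf => True
  | node l k r => l.isBST ∧ r.isBST ∧ (∀ x, l.mem x → x < k) ∧ (∀ x, r.mem x → k < x)

/-- Heap-order with respect to priorities `pri`: every node's priority is larger than
those of all its descendants. -/
def isHeap (pri : ℕ → ℝ) : BTree → Prop
  | leaf => True
  | node l k r => l.isHeap pri ∧ r.isHeap pri ∧
      (∀ x, l.mem x → pri x < pri k) ∧ (∀ x, r.mem x → pri x < pri k)

/-- The search path to key `x` in a BST; the ancestors of `x` (including `x` itself)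
are exactly the keys on this path. -/
def pathTo : BTree → ℕ → List ℕ
  | leaf, _ => []
  | node l k r, x => if x = k then [k] else if x < k then k :: l.pathTo x else k :: r.pathTo x

end BTree

namespace BTree

lemma mem_of_pathTo : ∀ (T : BTree) (x y : ℕ), y ∈ T.pathTo x → T.mem y
  | leaf, x, y, h => by simp [pathTo] at h
  | node l k r, x, y, h => by
    unfold pathTo at h
    split_ifs at h with h1 h2
    · simp at h; subst h; left; rfl
    · rcases List.mem_cons.mp h with h | h
      · left; exact h
      · right; left; exact mem_of_pathTo l x y h
    · rcases List.mem_cons.mp h with h | h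
      · left; exact h
      · right; right; exact mem_of_pathTo r x y h

lemma key (pri : ℕ → ℝ) : ∀ (T : BTree), T.isBST → T.isHeap pri →
    ∀ x y : ℕ, T.mem x → T.mem y →
    (∀ z, min x y ≤ z → z ≤ max x y → T.mem z) →
    (y ∈ T.pathTo x ↔ pri y = (Finset.Icc (min x y) (max x y)).sup'
      (Finset.nonempty_Icc.mpr min_le_max) pri) := by
  intro T
  induction T with
  | leaf => intro _ _ x y hx _ _; exact absurd hx id
  | node l k r ihl ihr =>
    intro hbst hheap x y hx hy hint
    obtain ⟨bl, br, hlk, hkr⟩ := hbst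
    obtain ⟨Hl, Hr, hpl, hpr⟩ := hheap
    have hmax : ∀ z, (node l k r).mem z → pri z ≤ pri k := by
      rintro z (rfl | h | h)
      · exact le_refl _
      · exact (hpl z h).le
      · exact (hpr z h).le
    have hsupk : k ∈ Finset.Icc (min x y) (max x y) →
        pri k = (Finset.Icc (min x y) (max x y)).sup'
          (Finset.nonempty_Icc.mpr min_le_max) pri := by
      intro hk
      refine le_antisymm (Finset.le_sup' pri hk) (Finset.sup'_le _ _ fun z hz => ?_)
      rw [Finset.mem_Icc] at hz
      exact hmax z (hint z hz.1 hz.2)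
    rcases eq_or_ne x k with rfl | hxk
    · -- x = k : pathTo = [x]
      have hpath : (node l x r).pathTo x = [x] := by simp [pathTo]
      rw [hpath, List.mem_singleton]
      have hkin : x ∈ Finset.Icc (min x y) (max x y) :=
        Finset.mem_Icc.mpr ⟨min_le_left _ _, le_max_left _ _⟩
      constructor
      · rintro rfl; exact hsupk hkin
      · intro h
        rcases hy with rfl | h' | h'
        · rfl
        · exact absurd h (by have := hpl y h'; rw [hsupk hkin] at this; linarith)
        · exact absurd h (by have := hpr y h'; rw [hsupk hkin] at this; linarith)
    · rcases hx with rfl | hxl | hxr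
      · exact absurd rfl hxk
      · -- x in left subtree
        have hxk' : x < k := hlk x hxl
        have hpath : (node l k r).pathTo x = k :: l.pathTo x := by
          simp [pathTo, hxk, hxk']
        rw [hpath, List.mem_cons]
        rcases eq_or_ne y k with rfl | hyk
        · have hkin : y ∈ Finset.Icc (min x y) (max x y) :=
            Finset.mem_Icc.mpr ⟨min_le_right _ _, le_max_right _ _⟩
          exact iff_of_true (Or.inl rfl) (hsupk hkin)
        · rcases hy with rfl | hyl | hyr
          · exact absurd rfl hyk
          · -- y in left subtree too
            have hyk' : y < k := hlk y hyl
            have hintl : ∀ z, min x y ≤ z → z ≤ max x y → l.mem z := by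
              intro z h1 h2
              have hzk : z < k := lt_of_le_of_lt h2 (max_lt hxk' hyk')
              rcases hint z h1 h2 with rfl | h | h
              · exact absurd hzk (lt_irrefl _)
              · exact h
              · exact absurd (hkr z h) (not_lt.mpr hzk.le)
            rw [or_iff_right hyk]
            exact ihl bl Hl x y hxl hyl hintl
          · -- y in right subtree : both sides false
            have hky : k < y := hkr y hyr
            have hkin : k ∈ Finset.Icc (min x y) (max x y) :=
              Finset.mem_Icc.mpr ⟨min_le_iff.mpr (Or.inl hxk'.le),
                le_max_iff.mpr (Or.inr hky.le)⟩
            refine iff_of_false ?_ ?_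
            · rintro (rfl | h)
              · exact hyk rfl
              · exact absurd (hlk y (mem_of_pathTo l x y h)) (not_lt.mpr hky.le)
            · intro h
              have := hpr y hyr
              rw [hsupk hkin] at this
              linarith
      · -- x in right subtree
        have hxk' : k < x := hkr x hxr
        have hpath : (node l k r).pathTo x = k :: r.pathTo x := by
          simp [pathTo, hxk, not_lt.mpr hxk'.le]
        rw [hpath, List.mem_cons]
        rcases eq_or_ne y k with rfl | hyk
        · have hkin : y ∈ Finset.Icc (min x y) (max x y) :=
            Finset.mem_Icc.mpr ⟨min_le_right _ _, le_max_right _ _⟩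
          exact iff_of_true (Or.inl rfl) (hsupk hkin)
        · rcases hy with rfl | hyl | hyr
          · exact absurd rfl hyk
          · -- y in left subtree : both sides false
            have hyk' : y < k := hlk y hyl
            have hkin : k ∈ Finset.Icc (min x y) (max x y) :=
              Finset.mem_Icc.mpr ⟨min_le_iff.mpr (Or.inr hyk'.le),
                le_max_iff.mpr (Or.inl hxk'.le)⟩
            refine iff_of_false ?_ ?_
            · rintro (rfl | h)
              · exact hyk rfl
              · exact absurd (hkr y (mem_of_pathTo r x y h)) (not_lt.mpr hyk'.le)
            · intro h
              have := hpl y hyl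
              rw [hsupk hkin] at this
              linarith
          · -- y in right subtree too
            have hyk' : k < y := hkr y hyr
            have hintr : ∀ z, min x y ≤ z → z ≤ max x y → r.mem z := by
              intro z h1 h2
              have hzk : k < z := lt_of_lt_of_le (lt_min hxk' hyk') h1
              rcases hint z h1 h2 with rfl | h | h
              · exact absurd hzk (lt_irrefl _)
              · exact absurd (hlk z h) (not_lt.mpr hzk.le)
              · exact h
            rw [or_iff_right hyk]
            exact ihr br Hr x y hxr hyr hintr

end BTree

/-- For a treap `T` over `[n] = {1,…,n}` with distinct priorities `pri`,
an item `y` is an ancestor of `x` (or equal to `x`) iff `pri y` is the maximum of `pri`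
over the interval of items between `x` and `y`. -/
theorem stmt0 (n : ℕ) (pri : ℕ → ℝ)
    (hdistinct : ∀ x ∈ Finset.Icc 1 n, ∀ y ∈ Finset.Icc 1 n, pri x = pri y → x = y)
    (T : BTree) (hkeys : ∀ x, T.mem x ↔ x ∈ Finset.Icc 1 n)
    (hbst : T.isBST) (hheap : T.isHeap pri)
    (x y : ℕ) (hx : x ∈ Finset.Icc 1 n) (hy : y ∈ Finset.Icc 1 n) :
    y ∈ T.pathTo x ↔
      pri y = (Finset.Icc (min x y) (max x y)).sup'
        (Finset.nonempty_Icc.mpr min_le_max) pri := by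
  refine BTree.key pri T hbst hheap x y ((hkeys x).mpr hx) ((hkeys y).mpr hy) ?_
  intro z h1 h2
  rw [hkeys]
  rw [Finset.mem_Icc] at hx hy ⊢
  exact ⟨le_trans (le_min hx.1 hy.1) h1, le_trans h2 (max_le hx.2 hy.2)⟩
end

section
/- If priorities pri_1,…,pri_n are i.i.d. uniform on [0,1], then for any fixed item x ∈ [n], the expected depth of x in the random treap equals Σ_{y=1}^{n} 1/(|x−y|+1), which is Θ(log n). -/
/-!
By linearity of expectation, the expected depth of `x` is the sum over `y` of the probability
that `pri y` is the largest of the `|x - y| + 1` independent uniform priorities between `x` and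
`y`. Conditioning on `pri y = t`, this probability is `∫₀¹ t ^ (k - 1) dt = 1 / k` for an interval
of `k` items. Splitting the sum at `x` expresses it through harmonic numbers as
`H (x + 1) + H (n - x) - 1`, and `log (k + 1) ≤ H k ≤ 1 + log k` gives the `Θ(log n)` bounds.
-/

open MeasureTheory Set
open scoped ENNReal

/-- The depth (number of ancestors, including the node itself) of item `x` in the treap
over `Fin n` determined by priorities `pri`: `y` is an ancestor of `x` (or `x` itself)
iff `pri y` is maximal on the interval of items between `x` and `y`. -/
noncomputable def treapDepth (n : ℕ) (pri : Fin n → ℝ) (x : Fin n) : ℕ :=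
  (Finset.univ.filter fun y : Fin n =>
    ∀ z : Fin n, min x y ≤ z → z ≤ max x y → pri z ≤ pri y).card

instance : IsProbabilityMeasure (volume.restrict (Icc (0 : ℝ) 1)) :=
  ⟨by simp [Real.volume_Icc]⟩

lemma measurableSet_setOf_forall_mem_apply_le {ι : Type*} (S : Finset ι) (y : ι) :
    MeasurableSet {f : ι → ℝ | ∀ z ∈ S, f z ≤ f y} := by
  simp only [ofPred_forall]
  exact S.measurableSet_biInter fun z _ =>
    measurableSet_le (measurable_pi_apply z) (measurable_pi_apply y)

lemma Fin.card_filter_succAbove_mem {m : ℕ} {S : Finset (Fin (m + 1))} {y : Fin (m + 1)}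
    (hy : y ∈ S) : (Finset.univ.filter fun j => y.succAbove j ∈ S).card = S.card - 1 := by
  rw [← Finset.card_erase_of_mem hy, ← Finset.card_map y.succAboveEmb]
  congr 1
  ext z
  simp only [Finset.mem_map, Finset.mem_filter, Finset.mem_univ, true_and, Fin.coe_succAboveEmb,
    Finset.mem_erase]
  constructor
  · rintro ⟨j, hj, rfl⟩
    exact ⟨Fin.succAbove_ne y j, hj⟩
  · rintro ⟨hzy, hz⟩
    obtain ⟨j, rfl⟩ := Fin.exists_succAbove_eq hzy
    exact ⟨j, hz, rfl⟩

lemma pi_setOf_forall_mem_apply_le {m : ℕ} (μ : Measure ℝ) [IsProbabilityMeasure μ]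
    {S : Finset (Fin (m + 1))} {y : Fin (m + 1)} (hy : y ∈ S) :
    Measure.pi (fun _ => μ) {f | ∀ z ∈ S, f z ≤ f y} = ∫⁻ t, μ (Iic t) ^ (S.card - 1) ∂μ := by
  -- Split off the coordinate `y`: once `f y = t` is fixed, the remaining coordinates indexed by
  -- `S` must independently lie in `Iic t`.
  set T := Finset.univ.filter fun j => y.succAbove j ∈ S
  set B : Set (ℝ × (Fin m → ℝ)) := {p | ∀ j ∈ T, p.2 j ≤ p.1}
  have hB : MeasurableSet B := by
    simp only [B, ofPred_forall]
    exact T.measurableSet_biInter fun j _ => measurableSet_le (by fun_prop) (by fun_prop)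
  have hpre : {f : Fin (m + 1) → ℝ | ∀ z ∈ S, f z ≤ f y}
      = MeasurableEquiv.piFinSuccAbove (fun _ => ℝ) y ⁻¹' B := by
    ext f
    simp only [B, T, mem_preimage, mem_ofPred_eq, Finset.mem_filter, Finset.mem_univ, true_and,
      MeasurableEquiv.piFinSuccAbove_apply, Fin.insertNthEquiv_symm_apply, Fin.removeNth]
    refine ⟨fun h j hj => h _ hj, fun h z hz => ?_⟩
    rcases eq_or_ne z y with rfl | hzy
    · exact le_rfl
    · obtain ⟨j, rfl⟩ := Fin.exists_succAbove_eq hzy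
      exact h j hz
  have hslice (t : ℝ) : Measure.pi (fun _ => μ) (Prod.mk t ⁻¹' B) = μ (Iic t) ^ T.card := by
    have : Prod.mk t ⁻¹' B = univ.pi fun j => if j ∈ (T : Set (Fin m)) then Iic t else univ := by
      rw [pi_univ_ite]; ext g; simp [B]
    rw [this, Measure.pi_pi]
    simp only [apply_ite, Finset.mem_coe, measure_univ, Fintype.prod_ite_mem, Finset.prod_const]
  rw [hpre, (measurePreserving_piFinSuccAbove (fun _ => μ) y).measure_preimage
    hB.nullMeasurableSet, Measure.prod_apply hB, ← Fin.card_filter_succAbove_mem hy]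
  exact lintegral_congr fun t => hslice t

lemma lintegral_uniform_Iic_pow (c : ℕ) :
    ∫⁻ t, volume.restrict (Icc (0 : ℝ) 1) (Iic t) ^ c ∂volume.restrict (Icc (0 : ℝ) 1)
      = ((c : ℝ≥0∞) + 1)⁻¹ := by
  calc _ = ∫⁻ t in Icc (0 : ℝ) 1, ENNReal.ofReal (t ^ c) := by
          refine setLIntegral_congr_fun measurableSet_Icc fun t ht => ?_
          have hcap : Iic t ∩ Icc 0 1 = Icc 0 t := Set.ext fun u =>
            ⟨fun ⟨h1, h2, _⟩ => ⟨h2, h1⟩, fun ⟨h1, h2⟩ => ⟨h2, h1, h2.trans ht.2⟩⟩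
          rw [Measure.restrict_apply measurableSet_Iic, hcap, Real.volume_Icc,
            sub_zero, ENNReal.ofReal_pow ht.1]
    _ = ENNReal.ofReal (∫ t in Icc (0 : ℝ) 1, t ^ c) := by
          refine (ofReal_integral_eq_lintegral_ofReal (continuous_pow c).integrableOn_Icc ?_).symm
          filter_upwards [ae_restrict_mem measurableSet_Icc] with t ht
          exact pow_nonneg ht.1 c
    _ = _ := by
          rw [integral_Icc_eq_integral_Ioc, ← intervalIntegral.integral_of_le zero_le_one,
            integral_pow,
            show ((1 : ℝ) ^ (c + 1) - 0 ^ (c + 1)) / (c + 1) = ((c + 1 : ℕ) : ℝ)⁻¹ by simp,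
            ENNReal.ofReal_inv_of_pos (by positivity), ENNReal.ofReal_natCast]
          push_cast
          rfl

theorem pi_uniform_setOf_forall_mem_apply_le {n : ℕ} {S : Finset (Fin n)} {y : Fin n}
    (hy : y ∈ S) :
    Measure.pi (fun _ => volume.restrict (Icc (0 : ℝ) 1)) {f | ∀ z ∈ S, f z ≤ f y}
      = (S.card : ℝ≥0∞)⁻¹ := by
  cases n with
  | zero => exact y.elim0
  | succ m =>
    have hS : 1 ≤ S.card := Finset.card_pos.2 ⟨y, hy⟩
    rw [pi_setOf_forall_mem_apply_le _ hy, lintegral_uniform_Iic_pow]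
    exact_mod_cast congrArg (fun k : ℕ => (k : ℝ≥0∞)⁻¹) (Nat.sub_add_cancel hS)

lemma Fin.card_Icc_min_max {n : ℕ} (x y : Fin n) :
    ((Finset.Icc (min x y) (max x y)).card : ℝ) = |(x : ℝ) - y| + 1 := by
  rw [Fin.card_Icc]
  rcases le_total x y with h | h
  · have h' : (x : ℕ) ≤ y := h
    rw [min_eq_left h, max_eq_right h, Nat.cast_sub (by omega), abs_sub_comm,
      abs_of_nonneg (sub_nonneg.2 (by exact_mod_cast h'))]
    push_cast; ring
  · have h' : (y : ℕ) ≤ x := h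
    rw [min_eq_right h, max_eq_left h, Nat.cast_sub (by omega),
      abs_of_nonneg (sub_nonneg.2 (by exact_mod_cast h'))]
    push_cast; ring

theorem integral_treapDepth (n : ℕ) (x : Fin n) :
    ∫ pri, (treapDepth n pri x : ℝ) ∂Measure.pi (fun _ => volume.restrict (Icc (0 : ℝ) 1))
      = ∑ y : Fin n, 1 / (|(x : ℝ) - y| + 1) := by
  set A : Fin n → Set (Fin n → ℝ) :=
    fun y => {f | ∀ z ∈ Finset.Icc (min x y) (max x y), f z ≤ f y}
  have hA (y : Fin n) : MeasurableSet (A y) := measurableSet_setOf_forall_mem_apply_le _ y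
  have hdepth (pri : Fin n → ℝ) : (treapDepth n pri x : ℝ) = ∑ y, (A y).indicator 1 pri := by
    rw [treapDepth, Finset.natCast_card_filter]
    refine Finset.sum_congr rfl fun y _ => ?_
    simp [A, indicator_apply]
  simp_rw [hdepth]
  rw [integral_finsetSum _ fun y _ => (integrable_const 1).indicator (hA y)]
  refine Finset.sum_congr rfl fun y _ => ?_
  rw [integral_indicator_one (hA y), measureReal_def,
    pi_uniform_setOf_forall_mem_apply_le (Finset.mem_Icc.2 ⟨min_le_right x y, le_max_right x y⟩),
    ENNReal.toReal_inv, ENNReal.toReal_natCast, Fin.card_Icc_min_max, one_div]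

lemma one_le_harmonic {n : ℕ} (hn : n ≠ 0) : 1 ≤ harmonic n := by
  obtain ⟨m, rfl⟩ := Nat.exists_eq_succ_of_ne_zero hn
  rw [harmonic, Finset.sum_range_succ', zero_add, Nat.cast_one, inv_one, le_add_iff_nonneg_left]
  positivity

theorem sum_one_div_abs_sub_add_one_eq_harmonic (n : ℕ) (x : Fin n) :
    ∑ y : Fin n, 1 / (|(x : ℝ) - y| + 1) + 1 = harmonic (x + 1) + harmonic (n - x) := by
  have hx : (x : ℕ) + 1 ≤ n := x.isLt
  have hleft : ∑ i ∈ Finset.range (x + 1), 1 / (|(x : ℝ) - i| + 1) = harmonic (x + 1) := by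
    rw [harmonic, Rat.cast_sum, ← Finset.sum_range_reflect]
    refine Finset.sum_congr rfl fun j hj => ?_
    have hj : j ≤ x := Nat.lt_succ_iff.1 (Finset.mem_range.1 hj)
    rw [Nat.add_sub_cancel, Nat.cast_sub hj, sub_sub_cancel, abs_of_nonneg (Nat.cast_nonneg _)]
    push_cast
    ring
  have hright :
      ∑ i ∈ Finset.Ico ((x : ℕ) + 1) n, 1 / (|(x : ℝ) - i| + 1) + 1 = harmonic (n - x) := by
    rw [Finset.sum_Ico_eq_sum_range, show n - x = n - (x + 1) + 1 by omega, harmonic,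
      Finset.sum_range_succ', Rat.cast_add, Rat.cast_sum]
    congr 1
    · refine Finset.sum_congr rfl fun k _ => ?_
      push_cast
      rw [show (x : ℝ) - (x + 1 + k) = -(k + 1) by ring, abs_neg, abs_of_pos (by positivity)]
      ring
    · simp
  rw [Fin.sum_univ_eq_sum_range (fun i => 1 / (|(x : ℝ) - i| + 1)) n,
    ← Finset.sum_range_add_sum_Ico _ hx, add_assoc, hright, hleft]

theorem log_le_two_mul_sum_one_div_abs_sub_add_one {n : ℕ} (x : Fin n) :
    Real.log n ≤ 2 * ∑ y : Fin n, 1 / (|(x : ℝ) - y| + 1) := by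
  have hT := sum_one_div_abs_sub_add_one_eq_harmonic n x
  have hx : (x : ℕ) < n := x.isLt
  have ha : (1 : ℝ) ≤ harmonic (x + 1) := by exact_mod_cast one_le_harmonic (Nat.succ_ne_zero _)
  have hb : (1 : ℝ) ≤ harmonic (n - x) := by exact_mod_cast one_le_harmonic (by omega)
  have hprod : (n : ℝ) ≤ ((x + 1 + 1 : ℕ) : ℝ) * ((n - x + 1 : ℕ) : ℝ) := by
    push_cast [Nat.cast_sub hx.le]
    nlinarith [(Nat.cast_le (α := ℝ)).2 hx.le, (x : ℕ).cast_nonneg (α := ℝ)]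
  calc Real.log n ≤ Real.log (((x + 1 + 1 : ℕ) : ℝ) * ((n - x + 1 : ℕ) : ℝ)) :=
        Real.log_le_log (by exact_mod_cast x.pos) hprod
    _ = Real.log ((x + 1 + 1 : ℕ) : ℝ) + Real.log ((n - x + 1 : ℕ) : ℝ) :=
        Real.log_mul (by positivity) (by positivity)
    _ ≤ harmonic (x + 1) + harmonic (n - x) :=
        add_le_add (log_add_one_le_harmonic _) (log_add_one_le_harmonic _)
    _ ≤ _ := by linarith

theorem sum_one_div_abs_sub_add_one_le_one_add_two_mul_log {n : ℕ} (x : Fin n) :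
    ∑ y : Fin n, 1 / (|(x : ℝ) - y| + 1) ≤ 1 + 2 * Real.log n := by
  have hT := sum_one_div_abs_sub_add_one_eq_harmonic n x
  have hx : (x : ℕ) < n := x.isLt
  have hH {k : ℕ} (hk0 : k ≠ 0) (hk : k ≤ n) : (harmonic k : ℝ) ≤ 1 + Real.log n :=
    (harmonic_le_one_add_log k).trans <| add_le_add_right
      (Real.log_le_log (Nat.cast_pos.2 (Nat.pos_of_ne_zero hk0)) (Nat.cast_le.2 hk)) 1
  linarith [hH (Nat.succ_ne_zero x) hx, hH (show n - x ≠ 0 by omega) (Nat.sub_le n x)]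

/-- If the priorities are i.i.d. uniform on `[0,1]`, the expected depth of any
fixed item `x` equals `∑_{y=1}^{n} 1/(|x−y|+1)`, and this quantity is `Θ(log n)`. -/
theorem stmt1 : ∃ c₁ c₂ : ℝ, 0 < c₁ ∧ 0 < c₂ ∧
    ∀ n : ℕ, 2 ≤ n → ∀ x : Fin n,
      ((∫ pri : Fin n → ℝ, (treapDepth n pri x : ℝ)
          ∂(Measure.pi fun _ : Fin n => volume.restrict (Set.Icc (0 : ℝ) 1)))
        = ∑ y : Fin n, 1 / (|(x.val : ℝ) - (y.val : ℝ)| + 1))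
      ∧ c₁ * Real.log n ≤ ∑ y : Fin n, 1 / (|(x.val : ℝ) - (y.val : ℝ)| + 1)
      ∧ (∑ y : Fin n, 1 / (|(x.val : ℝ) - (y.val : ℝ)| + 1)) ≤ c₂ * Real.log n := by
  have hlog2 : 0 < Real.log 2 := Real.log_pos one_lt_two
  refine ⟨1 / 2, 1 / Real.log 2 + 2, by norm_num, by positivity,
    fun n hn x => ⟨integral_treapDepth n x, ?_, ?_⟩⟩
  · linarith [log_le_two_mul_sum_one_div_abs_sub_add_one x]
  · have h2n : 1 ≤ Real.log n / Real.log 2 :=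
      (one_le_div hlog2).2 (Real.log_le_log two_pos (by exact_mod_cast hn))
    calc _ ≤ 1 + 2 * Real.log n := sum_one_div_abs_sub_add_one_le_one_add_two_mul_log x
      _ ≤ _ := by rw [add_mul, one_div_mul_eq_div]; linarith
end

section
/- Let f : [n] → ℕ₊ be access frequencies with Σ_x f_x = m, and assign priorities pri_x = −⌊log₂ log₂(m/f_x)⌋ + δ_x with δ_x i.i.d. uniform on (0,1). Then in the resulting treap, each item x has expected depth O(log(m/f_x)), and hence the expected total access cost Σ_x f_x · E[depth(x)] is O(Σ_x f_x log(m/f_x)). -/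
/-!
The depth of `x` counts the items `y` whose priority is maximal on the interval between `x` and
`y`, so its expectation is the sum of the probabilities of these events. With the level
`ℓ y = ⌊log₂ log₂ (m / f y)⌋` the priority is `-ℓ y + δ y`, `δ y ∈ [0, 1]`. An item of level
above `ℓ x` is almost surely beaten by `x` itself. Items of negative level have `f y > m / 2`,
so there is at most one of them. Level `t ≥ 0` holds fewer than `2 ^ 2 ^ (t + 1)` items, and on
each side of `x` the `k`-th nearest of them has the largest `δ` among the `k` nearest with
probability at most `1 / k` by exchangeability; so level `t` contributes at most
`2 H(2 ^ 2 ^ (t + 1)) = O(2 ^ t)`, and summing over `0 ≤ t ≤ ℓ x` gives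
`O(2 ^ ℓ x) = O(log (m / f x))`.
-/

open MeasureTheory

open ProbabilityTheory Finset

lemma harmonic_monotone : Monotone harmonic :=
  monotone_nat_of_le_succ fun n => by
    rw [harmonic_succ]
    exact le_add_of_nonneg_right (by positivity)

lemma harmonic_le_one_add_log_of_le {N : ℕ} {C : ℝ} (hN : (N : ℝ) ≤ C) (hC : 1 ≤ C) :
    (harmonic N : ℝ) ≤ 1 + Real.log C := by
  suffices Real.log N ≤ Real.log C by linarith [harmonic_le_one_add_log N]
  rcases N.eq_zero_or_pos with rfl | hN0
  · simpa using Real.log_nonneg hC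
  exact Real.log_le_log (by exact_mod_cast hN0) hN

lemma sum_inv_card_filter_le_eq_harmonic {α : Type*} [LinearOrder α] (L : Finset α) :
    ∑ y ∈ L, (1 : ℝ) / #{z ∈ L | z ≤ y} = harmonic #L := by
  induction L using Finset.induction_on_max with
  | empty => simp
  | insert a s ha ih =>
    have hnot : a ∉ s := fun h => lt_irrefl a (ha a h)
    rw [sum_insert hnot, card_insert_of_notMem hnot, harmonic_succ, filter_insert, if_pos le_rfl,
      card_insert_of_notMem (by simp [hnot]), filter_true_of_mem fun z hz => (ha z hz).le]
    have hs : ∀ y ∈ s, #{z ∈ insert a s | z ≤ y} = #{z ∈ s | z ≤ y} := fun y hy => by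
      rw [filter_insert, if_neg (not_le.mpr (ha y hy))]
    rw [sum_congr rfl fun y hy => by rw [hs y hy], ih]
    push_cast
    ring

lemma sum_inv_card_filter_ge_eq_harmonic {α : Type*} [LinearOrder α] (L : Finset α) :
    ∑ y ∈ L, (1 : ℝ) / #{z ∈ L | y ≤ z} = harmonic #L :=
  sum_inv_card_filter_le_eq_harmonic (α := αᵒᵈ) L

/-- Split `L` at `x`: on each side, the items of `L` from `x` up to `y` form a set `S` whose
sizes run through `1, …, #side`. -/
lemma sum_le_two_mul_harmonic {ι : Type*} [LinearOrder ι] (L : Finset ι) (x : ι) (T : ι → ℝ)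
    (hrank : ∀ y ∈ L, ∀ S ⊆ L, y ∈ S → (∀ z ∈ S, min x y ≤ z ∧ z ≤ max x y) → T y ≤ 1 / #S) :
    ∑ y ∈ L, T y ≤ 2 * harmonic #L := by
  have hL : ∀ s ⊆ L, (harmonic #s : ℝ) ≤ harmonic #L := fun s hs => by
    exact_mod_cast harmonic_monotone (card_le_card hs)
  rw [← sum_filter_add_sum_filter_not L (x ≤ ·)]
  set R := {y ∈ L | x ≤ y}
  set R' := {y ∈ L | ¬ x ≤ y}
  have hright : ∑ y ∈ R, T y ≤ harmonic #L := calc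
    ∑ y ∈ R, T y ≤ ∑ y ∈ R, (1 : ℝ) / #{z ∈ R | z ≤ y} := by
      refine sum_le_sum fun y hy => hrank y (mem_filter.1 hy).1 _
        ((filter_subset _ _).trans (filter_subset _ _)) (mem_filter.2 ⟨hy, le_rfl⟩) fun z hz => ?_
      simp only [R, mem_filter] at hz
      obtain ⟨⟨-, hxz⟩, hzy⟩ := hz
      exact ⟨(min_le_left _ _).trans hxz, hzy.trans (le_max_right _ _)⟩
    _ = harmonic #R := sum_inv_card_filter_le_eq_harmonic R
    _ ≤ harmonic #L := hL R (filter_subset _ _)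
  have hleft : ∑ y ∈ R', T y ≤ harmonic #L := calc
    ∑ y ∈ R', T y ≤ ∑ y ∈ R', (1 : ℝ) / #{z ∈ R' | y ≤ z} := by
      refine sum_le_sum fun y hy => hrank y (mem_filter.1 hy).1 _
        ((filter_subset _ _).trans (filter_subset _ _)) (mem_filter.2 ⟨hy, le_rfl⟩) fun z hz => ?_
      simp only [R', mem_filter] at hz
      obtain ⟨⟨-, hzx⟩, hyz⟩ := hz
      exact ⟨(min_le_right _ _).trans hyz, (not_le.1 hzx).le.trans (le_max_left _ _)⟩
    _ = harmonic #R' := sum_inv_card_filter_ge_eq_harmonic R'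
    _ ≤ harmonic #L := hL R' (filter_subset _ _)
  linarith

/-- `T y` stands for the probability that `y` is an ancestor of `x`, and `ℓ` for the levels. -/
lemma sum_le_card_add_sum_harmonic {ι : Type*} [LinearOrder ι] [Fintype ι] (ℓ : ι → ℤ)
    (T : ι → ℝ) (x : ι) (hle_one : ∀ y, T y ≤ 1) (hblocked : ∀ y, ℓ x < ℓ y → T y = 0)
    (hrank : ∀ y (S : Finset ι), y ∈ S → (∀ z ∈ S, ℓ z = ℓ y ∧ min x y ≤ z ∧ z ≤ max x y) →
      T y ≤ 1 / #S) :
    ∑ y, T y ≤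
      #{y | ℓ y < 0} + ∑ i ∈ range ((ℓ x).toNat + 1), 2 * (harmonic #{y | ℓ y = i} : ℝ) := by
  rw [← sum_filter_add_sum_filter_not univ (fun y => ℓ y < 0)]
  have hfiber : ∀ i : ℕ,
      {y ∈ univ.filter (¬ ℓ · < 0) | (ℓ y).toNat = i} = univ.filter (ℓ · = i) := fun i => by
    ext y
    simp only [mem_filter, mem_univ, true_and]
    omega
  gcongr
  · exact (sum_le_card_nsmul _ T 1 fun y _ => hle_one y).trans (by simp)
  calc ∑ y ∈ {y | ¬ ℓ y < 0}, T y
      ≤ ∑ i ∈ range ((ℓ x).toNat + 1), ∑ y ∈ {y ∈ {y | ¬ ℓ y < 0} | (ℓ y).toNat = i}, T y :=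
        sum_le_sum_fiberwise_of_sum_fiber_nonpos fun i hi => (sum_eq_zero fun y hy => hblocked y (by
          simp only [mem_range, mem_filter, mem_univ, true_and] at hi hy; omega)).le
    _ ≤ _ := sum_le_sum fun i _ => by
        rw [hfiber]
        refine sum_le_two_mul_harmonic _ x T fun y hy S hS hyS hSxy => hrank y S hyS fun z hz => ?_
        exact ⟨((mem_filter.1 (hS hz)).2).trans (mem_filter.1 hy).2.symm, hSxy z hz⟩

/-- `⌊log₂ log₂ r⌋`: an item of frequency `f` gets priority `-loglogLevel (m / f) + δ`.
As `Real.logb 2 0 = 0`, `loglogLevel 1 = 0`. -/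
noncomputable def loglogLevel (r : ℝ) : ℤ := ⌊Real.logb 2 (Real.logb 2 r)⌋

lemma lt_two_rpow_two_zpow_loglogLevel {r : ℝ} (hr : 1 ≤ r) :
    r < (2 : ℝ) ^ ((2 : ℝ) ^ (loglogLevel r + 1)) := by
  rcases hr.eq_or_lt with rfl | hr
  · exact Real.one_lt_rpow one_lt_two (by positivity)
  rw [← Real.logb_lt_iff_lt_rpow one_lt_two (by linarith), ← Real.rpow_intCast,
    ← Real.logb_lt_iff_lt_rpow one_lt_two (Real.logb_pos one_lt_two hr)]
  push_cast
  exact Int.lt_floor_add_one _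

lemma two_pow_toNat_loglogLevel_le {r : ℝ} (hr : 1 ≤ r) :
    (2 : ℝ) ^ (loglogLevel r).toNat ≤ 1 + Real.logb 2 r := by
  have hlog : 0 ≤ Real.logb 2 r := Real.logb_nonneg one_lt_two hr
  rcases le_or_gt (loglogLevel r) 0 with h | h
  · rw [Int.toNat_of_nonpos h, pow_zero]
    linarith
  have hlevel : (loglogLevel r : ℝ) ≤ Real.logb 2 (Real.logb 2 r) := Int.floor_le _
  have hpos : 0 < Real.logb 2 r := by
    refine hlog.lt_of_ne fun h0 => ?_
    rw [← h0, Real.logb_zero] at hlevel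
    exact (Int.cast_pos.2 h).not_ge hlevel
  have hcast : (2 : ℝ) ^ (loglogLevel r).toNat = (2 : ℝ) ^ (loglogLevel r : ℝ) := by
    rw [← Real.rpow_natCast]
    exact_mod_cast congrArg (fun t : ℤ => (2 : ℝ) ^ (t : ℝ)) (Int.toNat_of_nonneg h.le)
  rw [hcast]
  linarith [(Real.le_logb_iff_rpow_le one_lt_two hpos).1 hlevel]

lemma card_lt_of_lt_mul {ι : Type*} (s : Finset ι) (g : ι → ℝ) {a C : ℝ} (hC : 0 < C)
    (hg : ∀ y ∈ s, 0 < g y) (hlt : ∀ y ∈ s, a < C * g y) (hsum : ∑ y ∈ s, g y ≤ a) :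
    (#s : ℝ) < C := by
  rcases s.eq_empty_or_nonempty with rfl | hs
  · simpa using hC
  have ha : 0 < a := (sum_pos hg hs).trans_le hsum
  have : #s * a < C * a := calc
    #s * a = ∑ _y ∈ s, a := by simp
    _ < ∑ y ∈ s, C * g y := sum_lt_sum_of_nonempty hs hlt
    _ = C * ∑ y ∈ s, g y := (mul_sum ..).symm
    _ ≤ C * a := by gcongr
  exact lt_of_mul_lt_mul_right this ha.le

section Frequencies

variable {ι : Type*} [Fintype ι] {m : ℕ}

lemma one_le_div_of_sum_eq (f : ι → ℕ) (hf : ∀ y, 1 ≤ f y) (hm : ∑ y, f y = m) (y : ι) :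
    1 ≤ (m : ℝ) / f y := by
  rw [one_le_div (by exact_mod_cast hf y)]
  exact_mod_cast hm ▸ single_le_sum (fun _ _ => Nat.zero_le _) (mem_univ y)

lemma card_filter_loglogLevel_lt (f : ι → ℕ) (hf : ∀ y, 1 ≤ f y) (hm : ∑ y, f y = m)
    (P : ℤ → Prop) [DecidablePred P] {C : ℝ} (hC : 0 < C)
    (hPC : ∀ t, P t → (2 : ℝ) ^ ((2 : ℝ) ^ (t + 1)) ≤ C) :
    (#{y | P (loglogLevel (m / f y))} : ℝ) < C := by
  refine card_lt_of_lt_mul (a := m) _ (fun y => (f y : ℝ)) hC (fun y _ => by exact_mod_cast hf y)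
    (fun y hy => ?_) ?_
  · have := (lt_two_rpow_two_zpow_loglogLevel (one_le_div_of_sum_eq f hf hm y)).trans_le
      (hPC _ (mem_filter.1 hy).2)
    rwa [div_lt_iff₀ (by exact_mod_cast hf y)] at this
  · calc ∑ y ∈ _, (f y : ℝ) ≤ ∑ y, (f y : ℝ) :=
          sum_le_sum_of_subset_of_nonneg (filter_subset _ _) fun _ _ _ => Nat.cast_nonneg _
      _ = m := by exact_mod_cast hm

lemma card_filter_loglogLevel_neg_le_one (f : ι → ℕ) (hf : ∀ y, 1 ≤ f y) (hm : ∑ y, f y = m) :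
    #{y | loglogLevel (m / f y) < 0} ≤ 1 := by
  have := card_filter_loglogLevel_lt f hf hm (· < 0) two_pos fun t ht => calc
    (2 : ℝ) ^ ((2 : ℝ) ^ (t + 1)) ≤ 2 ^ (1 : ℝ) :=
      Real.rpow_le_rpow_of_exponent_le one_le_two (zpow_le_one_of_nonpos₀ one_le_two (by omega))
    _ = 2 := Real.rpow_one 2
  exact Nat.lt_succ_iff.mp (by exact_mod_cast this)

lemma two_mul_harmonic_card_filter_loglogLevel_eq_le (f : ι → ℕ) (hf : ∀ y, 1 ≤ f y)
    (hm : ∑ y, f y = m) (i : ℕ) :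
    2 * (harmonic #{y | loglogLevel (m / f y) = i} : ℝ) ≤ 5 * 2 ^ i := by
  set C := (2 : ℝ) ^ ((2 : ℝ) ^ ((i : ℤ) + 1))
  have hcard := card_filter_loglogLevel_lt f hf hm (· = (i : ℤ)) (C := C)
    (Real.rpow_pos_of_pos two_pos _) fun t ht => by rw [ht]
  have h := harmonic_le_one_add_log_of_le hcard.le (Real.one_le_rpow one_le_two (by positivity))
  rw [Real.log_rpow two_pos, show (i : ℤ) + 1 = ((i + 1 : ℕ) : ℤ) by push_cast; ring,
    zpow_natCast, pow_succ] at h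
  -- `2 H ≤ 2 + 4 log 2 · 2 ^ i` and `log 2 < 0.7`
  nlinarith [Real.log_two_lt_d9, one_le_pow₀ (M₀ := ℝ) (n := i) one_le_two]

end Frequencies

lemma logb_two_le_two_mul_log {r : ℝ} (hr : 1 ≤ r) : Real.logb 2 r ≤ 2 * Real.log r := by
  rw [Real.logb, div_le_iff₀ (Real.log_pos one_lt_two)]
  nlinarith [Real.log_nonneg hr, Real.log_two_gt_d9]

section IIDProduct

variable {ι : Type*} [Fintype ι] (ν : Measure ℝ)

lemma measure_pi_eval_eq_eval [IsProbabilityMeasure ν] [NullSingletonClass ν] {y y' : ι}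
    (h : y ≠ y') : Measure.pi (fun _ : ι => ν) {δ | δ y = δ y'} = 0 := by
  -- `(δ y, δ y')` has law `ν ⊗ ν`, which does not charge the diagonal
  have hind : IndepFun (fun δ : ι → ℝ => δ y) (fun δ => δ y') (Measure.pi fun _ => ν) :=
    (iIndepFun_pi (X := fun _ => id) fun _ => aemeasurable_id).indepFun h
  rw [indepFun_iff_map_prod_eq_prod_map_map (measurable_pi_apply y).aemeasurable
    (measurable_pi_apply y').aemeasurable, (measurePreserving_eval _ y).map_eq,
    (measurePreserving_eval _ y').map_eq] at hind
  change (Measure.pi fun _ => ν) ((fun δ : ι → ℝ => (δ y, δ y')) ⁻¹' Set.diagonal ℝ) = 0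
  rw [← Measure.map_apply (by fun_prop) measurableSet_diagonal, hind,
    Measure.prod_apply measurableSet_diagonal]
  simp [Set.preimage, Set.diagonal]

lemma measurableSet_forall_mem_le (S : Finset ι) (y : ι) :
    MeasurableSet {δ : ι → ℝ | ∀ z ∈ S, δ z ≤ δ y} := by
  simp only [Set.ofPred_forall]
  exact .iInter fun z => .iInter fun _ => measurableSet_le (by fun_prop) (by fun_prop)

lemma measure_pi_forall_mem_le_eq [SigmaFinite ν] {S : Finset ι} {y y' : ι} (hy : y ∈ S)
    (hy' : y' ∈ S) :
    Measure.pi (fun _ : ι => ν) {δ | ∀ z ∈ S, δ z ≤ δ y'} =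
      Measure.pi (fun _ : ι => ν) {δ | ∀ z ∈ S, δ z ≤ δ y} := by
  classical
  set σ := Equiv.swap y y'
  have hσ : MeasurePreserving (MeasurableEquiv.arrowCongr' σ (MeasurableEquiv.refl ℝ))
      (Measure.pi fun _ : ι => ν) (Measure.pi fun _ : ι => ν) :=
    measurePreserving_arrowCongr' _ _ σ _ fun _ => MeasurePreserving.id ν
  have hσS : ∀ z ∈ S, σ z ∈ S := fun z hz => by
    rcases eq_or_ne z y with rfl | hzy
    · simpa [σ] using hy'
    rcases eq_or_ne z y' with rfl | hzy'
    · simpa [σ] using hy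
    simpa [σ, Equiv.swap_apply_of_ne_of_ne hzy hzy'] using hz
  have hpre : MeasurableEquiv.arrowCongr' σ (MeasurableEquiv.refl ℝ) ⁻¹'
      {δ | ∀ z ∈ S, δ z ≤ δ y} = {δ | ∀ z ∈ S, δ z ≤ δ y'} := by
    ext δ
    simp only [MeasurableEquiv.arrowCongr', Equiv.arrowCongr', MeasurableEquiv.coe_mk,
      Set.preimage_ofPred_eq, Equiv.arrowCongr_apply, EquivLike.coe_coe, Equiv.symm_swap,
      Function.comp_apply, MeasurableEquiv.refl_apply, Equiv.swap_apply_left, Set.mem_ofPred_eq, σ]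
    exact ⟨fun h z hz => by simpa [σ] using h _ (hσS z hz), fun h z hz => h _ (hσS z hz)⟩
  rw [← hpre, hσ.measure_preimage (measurableSet_forall_mem_le S y).nullMeasurableSet]

/-- The `#S` events "`δ y` is the largest of `δ|S`" have equal probability by symmetry, and they
overlap only on null ties. -/
lemma measureReal_pi_forall_mem_le_le_inv_card [IsProbabilityMeasure ν] [NullSingletonClass ν]
    (S : Finset ι) {y : ι} (hy : y ∈ S) :
    (Measure.pi fun _ : ι => ν).real {δ | ∀ z ∈ S, δ z ≤ δ y} ≤ 1 / #S := by
  set μ := Measure.pi fun _ : ι => ν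
  set E : ι → Set (ι → ℝ) := fun y => {δ | ∀ z ∈ S, δ z ≤ δ y}
  have hdisj : (S : Set ι).Pairwise (Function.onFun (AEDisjoint μ) E) := fun a ha b hb hab =>
    measure_mono_null (fun δ hδ => le_antisymm (hδ.2 a ha) (hδ.1 b hb))
      (measure_pi_eval_eq_eval ν hab)
  have hsymm : ∀ y' ∈ S, μ.real (E y') = μ.real (E y) := fun y' hy' =>
    congrArg ENNReal.toReal (measure_pi_forall_mem_le_eq ν hy hy')
  have hcard : #S * μ.real (E y) ≤ 1 := calc
    #S * μ.real (E y) = ∑ y' ∈ S, μ.real (E y') := by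
      rw [sum_congr rfl hsymm, sum_const, nsmul_eq_mul]
    _ = μ.real (⋃ y' ∈ S, E y') := (measureReal_biUnion_finset₀ hdisj fun b _ =>
      (measurableSet_forall_mem_le S b).nullMeasurableSet).symm
    _ ≤ 1 := measureReal_le_one
  rw [le_div_iff₀ (by exact_mod_cast card_pos.mpr ⟨y, hy⟩)]
  linarith

end IIDProduct

instance : IsProbabilityMeasure (volume.restrict (Set.Icc (0 : ℝ) 1)) := ⟨by simp⟩

lemma measure_pi_uniform_add_le_eq_zero {ι : Type*} [Fintype ι] {a : ℝ} (ha : 1 ≤ a) (y z : ι) :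
    Measure.pi (fun _ : ι => volume.restrict (Set.Icc (0 : ℝ) 1)) {δ | a + δ z ≤ δ y} = 0 := by
  have hsub : {δ : ι → ℝ | a + δ z ≤ δ y} ⊆
      (fun δ => δ z) ⁻¹' Set.Iic 0 ∪ (fun δ => δ y) ⁻¹' Set.Ioi 1 := by
    intro δ h
    by_contra hc
    simp only [Set.mem_union, Set.mem_preimage, Set.mem_Iic, Set.mem_Ioi, not_or, not_le] at hc
    simp only [Set.mem_ofPred_eq] at h
    linarith
  refine measure_mono_null hsub (measure_union_null ?_ ?_)
  · rw [(measurePreserving_eval _ z).measure_preimage measurableSet_Iic.nullMeasurableSet,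
      Measure.restrict_apply measurableSet_Iic]
    exact measure_mono_null (fun t ht => le_antisymm ht.1 ht.2.1) (measure_singleton 0)
  · rw [(measurePreserving_eval _ y).measure_preimage measurableSet_Ioi.nullMeasurableSet,
      Measure.restrict_apply measurableSet_Ioi]
    exact measure_mono_null (fun t ht => absurd ht.2.2 (not_le.mpr ht.1)) measure_empty

section TreapAncestor

variable {ι : Type*} [LinearOrder ι]

def treapAncestorEvent (c : ι → ℝ) (x y : ι) : Set (ι → ℝ) :=
  {δ | ∀ z, min x y ≤ z → z ≤ max x y → c z + δ z ≤ c y + δ y}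

variable [Fintype ι]

lemma measurableSet_treapAncestorEvent (c : ι → ℝ) (x y : ι) :
    MeasurableSet (treapAncestorEvent c x y) := by
  simp only [treapAncestorEvent, Set.ofPred_forall]
  exact .iInter fun z => .iInter fun _ => .iInter fun _ =>
    measurableSet_le (by fun_prop) (by fun_prop)

lemma measure_treapAncestorEvent_eq_zero (c : ι → ℝ) {x y z : ι} (hz : min x y ≤ z ∧ z ≤ max x y)
    (hc : c y + 1 ≤ c z) :
    Measure.pi (fun _ : ι => volume.restrict (Set.Icc (0 : ℝ) 1)) (treapAncestorEvent c x y) = 0 :=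
  measure_mono_null (fun δ hδ => by have := hδ z hz.1 hz.2; simp only [Set.mem_ofPred_eq]; linarith)
    (measure_pi_uniform_add_le_eq_zero (a := c z - c y) (by linarith) y z)

lemma measureReal_treapAncestorEvent_le_inv_card (ν : Measure ℝ) [IsProbabilityMeasure ν]
    [NullSingletonClass ν] (c : ι → ℝ) {x y : ι} (S : Finset ι) (hy : y ∈ S)
    (hS : ∀ z ∈ S, c z = c y ∧ min x y ≤ z ∧ z ≤ max x y) :
    (Measure.pi fun _ : ι => ν).real (treapAncestorEvent c x y) ≤ 1 / #S := by
  refine (measureReal_mono fun δ hδ z hz => ?_).trans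
    (measureReal_pi_forall_mem_le_le_inv_card ν S hy)
  obtain ⟨hcz, hxz, hzy⟩ := hS z hz
  have := hδ z hxz hzy
  rw [hcz] at this
  linarith

end TreapAncestor

lemma integral_treapDepth_eq_sum {n : ℕ} (μ : Measure (Fin n → ℝ)) [IsFiniteMeasure μ]
    (c : Fin n → ℝ) (x : Fin n) :
    ∫ δ, (treapDepth n (fun y => c y + δ y) x : ℝ) ∂μ = ∑ y, μ.real (treapAncestorEvent c x y) := by
  have hdepth : ∀ δ, (treapDepth n (fun y => c y + δ y) x : ℝ) =
      ∑ y, (treapAncestorEvent c x y).indicator 1 δ := fun δ => by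
    rw [treapDepth, card_filter, Nat.cast_sum]
    refine sum_congr rfl fun y _ => ?_
    simp only [Set.indicator_apply, treapAncestorEvent, Set.mem_ofPred_eq, Pi.one_apply]
    split_ifs <;> simp
  simp_rw [hdepth]
  rw [integral_finsetSum _ fun y _ =>
    (integrable_const 1).indicator (measurableSet_treapAncestorEvent c x y)]
  simp_rw [integral_indicator_one (measurableSet_treapAncestorEvent c x _)]

lemma integral_treapDepth_le {n m : ℕ} (f : Fin n → ℕ) (hf : ∀ y, 1 ≤ f y) (hm : ∑ y, f y = m)
    (x : Fin n) :
    ∫ δ, (treapDepth n (fun y => -(loglogLevel (m / f y) : ℝ) + δ y) x : ℝ)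
        ∂(Measure.pi fun _ : Fin n => volume.restrict (Set.Icc (0 : ℝ) 1))
      ≤ 20 * (1 + Real.log (m / f x)) := by
  set ℓ : Fin n → ℤ := fun y => loglogLevel (m / f y)
  set k := (ℓ x).toNat
  have hr : 1 ≤ (m : ℝ) / f x := one_le_div_of_sum_eq f hf hm x
  rw [integral_treapDepth_eq_sum]
  calc ∑ y, _ ≤ #{y | ℓ y < 0} + ∑ i ∈ range (k + 1), 2 * (harmonic #{y | ℓ y = i} : ℝ) := by
        refine sum_le_card_add_sum_harmonic ℓ _ x (fun y => measureReal_le_one)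
          (fun y hy => ?_) fun y S hyS hS =>
            measureReal_treapAncestorEvent_le_inv_card _ _ S hyS fun z hz =>
              ⟨congrArg (fun t : ℤ => -(t : ℝ)) (hS z hz).1, (hS z hz).2⟩
        have hlt : (ℓ x : ℝ) + 1 ≤ ℓ y := by exact_mod_cast hy
        rw [measureReal_def, measure_treapAncestorEvent_eq_zero _
          ⟨min_le_left x y, le_max_left x y⟩ (by linarith), ENNReal.toReal_zero]
    _ ≤ 1 + ∑ i ∈ range (k + 1), 5 * (2 : ℝ) ^ i :=
        add_le_add (by exact_mod_cast card_filter_loglogLevel_neg_le_one f hf hm)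
          (sum_le_sum fun i _ => two_mul_harmonic_card_filter_loglogLevel_eq_le f hf hm i)
    _ = 10 * 2 ^ k - 4 := by rw [← mul_sum, geom_sum_eq (by norm_num)]; ring
    _ ≤ 10 * (1 + Real.logb 2 (m / f x)) := by linarith [two_pow_toNat_loglogLevel_le hr]
    _ ≤ 20 * (1 + Real.log (m / f x)) := by linarith [logb_two_le_two_mul_log hr]

/-- **Static Optimality.** With frequencies `f : [n] → ℕ₊`, `∑ f = m`, and
priorities `pri_x = −⌊log₂ log₂(m/f_x)⌋ + δ_x` (`δ_x` i.i.d. uniform on `(0,1)`), each item `x`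
has expected depth `O(log(m/f_x))`, hence the expected total access cost
`∑_x f_x·E[depth(x)]` is `O(∑_x f_x log(m/f_x))`. -/
theorem stmt5 : ∃ c : ℝ, 0 < c ∧
    ∀ (n m : ℕ) (f : Fin n → ℕ), (∀ x, 1 ≤ f x) → (∑ x, f x) = m →
      (∀ x : Fin n,
        (∫ δ : Fin n → ℝ,
            (treapDepth n
              (fun y => -((⌊Real.logb 2 (Real.logb 2 ((m : ℝ) / (f y : ℝ)))⌋ : ℤ) : ℝ) + δ y) x : ℝ)
            ∂(Measure.pi fun _ : Fin n => volume.restrict (Set.Icc (0 : ℝ) 1)))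
          ≤ c * (1 + Real.log ((m : ℝ) / (f x : ℝ))))
      ∧ (∑ x : Fin n, (f x : ℝ) *
            ∫ δ : Fin n → ℝ,
              (treapDepth n
                (fun y => -((⌊Real.logb 2 (Real.logb 2 ((m : ℝ) / (f y : ℝ)))⌋ : ℤ) : ℝ) + δ y) x : ℝ)
              ∂(Measure.pi fun _ : Fin n => volume.restrict (Set.Icc (0 : ℝ) 1)))
          ≤ c * ∑ x : Fin n, (f x : ℝ) * (1 + Real.log ((m : ℝ) / (f x : ℝ))) := by
  refine ⟨20, by norm_num, fun n m f hf hm => ⟨integral_treapDepth_le f hf hm, ?_⟩⟩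
  rw [mul_sum]
  refine sum_le_sum fun x _ => ?_
  rw [mul_left_comm]
  exact mul_le_mul_of_nonneg_left (integral_treapDepth_le f hf hm x) (Nat.cast_nonneg _)
end
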